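/- Approximate time reversal, lower bound: Let v ∈ C⁶(ℝ) be positive with v and its first six derivatives of at most polynomial growth, ∫ v dμ = 1, and suppose Lv ≤ A₁v, L²v ≥ −A₂v, |L³v| ≤ A₃v pointwise with constants A₁, A₂, A₃ ≥ 0. Let t > 0 satisfy tA₁ + (t²/2)A₂ ≤ 1 and t³A₃ ≤ 1. Then g_t := (1 − tL + (1/2)t²L²)v is nonnegative with ∫ g_t dμ = 1 (i.e. g_t is a probability density with respect to μ), and the function v_t := e^{tL}g_t satisfies pointwise v_t ≥ (1 − (1/6)t³A₃ e^{tA₁}) v ≥ (1/2) v. -/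

import Mathlib

/-!
Write `P_s = e^{sL}`. For `f` with two derivatives of polynomial growth, differentiating the
Mehler formula under the integral sign gives `∂ₛ P_s f = P_s L f`. Hence
`Φ(s) = P_s v - s P_s Lv + (s²/2) P_s L²v` has `Φ(0) = v` and `Φ'(s) = (s²/2) P_s L³v`, and since
`P_s` is positive, `L³v ≥ -A₃ v` together with the Grönwall bound `P_s v ≤ e^{sA₁} v` (from
`Lv ≤ A₁ v`) gives `Φ(t) ≥ v - (t³/6) A₃ e^{tA₁} v`. The density claims for `g_t` are pointwise
arithmetic and the invariance `∫ Lf dμ = 0`.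
-/

open MeasureTheory
open scoped BigOperators

/-- The Ornstein–Uhlenbeck generator `L = (1/4)d²/dx² − (x/2)d/dx`. -/
noncomputable def OUgen (f : ℝ → ℝ) : ℝ → ℝ := fun x =>
  (1 / 4) * deriv (deriv f) x - (x / 2) * deriv f x

/-- The Ornstein–Uhlenbeck (Mehler) semigroup `e^{tL}`. -/
noncomputable def mehler (t : ℝ) (f : ℝ → ℝ) : ℝ → ℝ := fun x =>
  (2 * Real.pi) ^ (-(1 : ℝ) / 2) *
    ∫ ξ : ℝ, f (Real.exp (-t / 2) * x + Real.sqrt ((1 - Real.exp (-t)) / 2) * ξ) *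
      Real.exp (-ξ ^ 2 / 2)

/-- The reversible measure `μ(dx) = e^{−x²} dx` of the OU process. -/
noncomputable def gaussMeasure : Measure ℝ :=
  volume.withDensity fun x => ENNReal.ofReal (Real.exp (-x ^ 2))

open Real Filter Topology

def PolyGrowth (f : ℝ → ℝ) : Prop :=
  ∃ (C : ℝ) (k : ℕ), ∀ x, |f x| ≤ C * (1 + x ^ 2) ^ k

lemma one_le_one_add_sq (x : ℝ) : 1 ≤ 1 + x ^ 2 := by nlinarith [sq_nonneg x]

lemma abs_le_one_add_sq (x : ℝ) : |x| ≤ 1 + x ^ 2 := by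
  nlinarith [sq_abs x, sq_nonneg (|x| - 1)]

lemma integrable_one_add_sq_pow_mul_exp_neg_mul_sq (k : ℕ) {b : ℝ} (hb : 0 < b) :
    Integrable fun x : ℝ => (1 + x ^ 2) ^ k * exp (-b * x ^ 2) := by
  have hterm : ∀ m : ℕ, Integrable fun x : ℝ => x ^ (2 * m) * exp (-b * x ^ 2) := fun m => by
    have := integrable_rpow_mul_exp_neg_mul_sq hb (s := ((2 * m : ℕ) : ℝ))
      (neg_one_lt_zero.trans_le (Nat.cast_nonneg _))
    simpa only [Real.rpow_natCast] using this
  simp_rw [add_comm (1 : ℝ), add_pow, one_pow, mul_one, Finset.sum_mul]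
  refine integrable_finsetSum _ fun m _ => ?_
  simpa [← pow_mul, mul_comm, mul_left_comm, mul_assoc] using (hterm m).const_mul (k.choose m : ℝ)

namespace PolyGrowth

variable {f g : ℝ → ℝ}

lemma exists_bound_of_le (hf : PolyGrowth f) :
    ∃ (C : ℝ) (k : ℕ), 0 ≤ C ∧ ∀ m ≥ k, ∀ x, |f x| ≤ C * (1 + x ^ 2) ^ m := by
  obtain ⟨C, k, h⟩ := hf
  have hC : 0 ≤ C := by simpa using (abs_nonneg _).trans (h 0)
  refine ⟨C, k, hC, fun m hm x => (h x).trans ?_⟩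
  gcongr
  exact one_le_one_add_sq x

lemma const (c : ℝ) : PolyGrowth fun _ => c := ⟨|c|, 0, by simp⟩

lemma add (hf : PolyGrowth f) (hg : PolyGrowth g) :
    PolyGrowth fun x => f x + g x := by
  obtain ⟨C, k, -, hC⟩ := hf.exists_bound_of_le
  obtain ⟨D, l, -, hD⟩ := hg.exists_bound_of_le
  refine ⟨C + D, k + l, fun x => ?_⟩
  have := hC (k + l) (by omega) x
  have := hD (k + l) (by omega) x
  calc |f x + g x| ≤ |f x| + |g x| := abs_add_le _ _
    _ ≤ (C + D) * (1 + x ^ 2) ^ (k + l) := by linarith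

lemma mul (hf : PolyGrowth f) (hg : PolyGrowth g) :
    PolyGrowth fun x => f x * g x := by
  obtain ⟨C, k, hC0, hC⟩ := hf.exists_bound_of_le
  obtain ⟨D, l, -, hD⟩ := hg.exists_bound_of_le
  refine ⟨C * D, k + l, fun x => ?_⟩
  rw [abs_mul, pow_add]
  calc |f x| * |g x| ≤ (C * (1 + x ^ 2) ^ k) * (D * (1 + x ^ 2) ^ l) :=
        mul_le_mul (hC k le_rfl x) (hD l le_rfl x) (abs_nonneg _) (by positivity)
    _ = C * D * ((1 + x ^ 2) ^ k * (1 + x ^ 2) ^ l) := by ring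

lemma id : PolyGrowth fun x => x := ⟨1, 1, fun x => by simpa using abs_le_one_add_sq x⟩

lemma const_mul (hf : PolyGrowth f) (c : ℝ) : PolyGrowth fun x => c * f x :=
  (const c).mul hf

lemma comp_affine_uniform (hf : PolyGrowth f) (A : ℝ) :
    ∃ (C : ℝ) (k : ℕ), ∀ a σ ξ, |a| ≤ A → |σ| ≤ A → |f (a + σ * ξ)| ≤ C * (1 + ξ ^ 2) ^ k := by
  obtain ⟨C, k, hC0, hC⟩ := hf.exists_bound_of_le
  refine ⟨C * (2 * (1 + A ^ 2)) ^ k, k, fun a σ ξ ha hσ => (hC k le_rfl _).trans ?_⟩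
  have ha2 : a ^ 2 ≤ A ^ 2 := sq_le_sq' (abs_le.mp ha).1 (abs_le.mp ha).2
  have hσ2 : σ ^ 2 ≤ A ^ 2 := sq_le_sq' (abs_le.mp hσ).1 (abs_le.mp hσ).2
  have key : 1 + (a + σ * ξ) ^ 2 ≤ 2 * (1 + A ^ 2) * (1 + ξ ^ 2) := by
    nlinarith [sq_nonneg (a - σ * ξ), sq_nonneg ξ, mul_le_mul_of_nonneg_right hσ2 (sq_nonneg ξ)]
  rw [mul_assoc, ← mul_pow]
  gcongr

lemma comp_affine (hf : PolyGrowth f) (a σ : ℝ) :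
    PolyGrowth fun ξ => f (a + σ * ξ) := by
  obtain ⟨C, k, h⟩ := hf.comp_affine_uniform (max |a| |σ|)
  exact ⟨C, k, fun ξ => h a σ ξ (le_max_left _ _) (le_max_right _ _)⟩

lemma integrable_mul_exp_neg_mul_sq (hf : PolyGrowth f)
    (hm : AEStronglyMeasurable f) {b : ℝ} (hb : 0 < b) :
    Integrable fun x => f x * exp (-b * x ^ 2) := by
  obtain ⟨C, k, hC⟩ := hf
  refine ((integrable_one_add_sq_pow_mul_exp_neg_mul_sq k hb).const_mul C).mono'
    (hm.mul (by fun_prop)) (Eventually.of_forall fun x => ?_)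
  rw [norm_mul, Real.norm_eq_abs, Real.norm_eq_abs, abs_exp, ← mul_assoc]
  exact mul_le_mul_of_nonneg_right (hC x) (exp_nonneg _)

lemma integrable_mul_gaussian (hf : PolyGrowth f)
    (hm : AEStronglyMeasurable f) : Integrable fun x => f x * exp (-x ^ 2 / 2) := by
  convert hf.integrable_mul_exp_neg_mul_sq hm (b := 1 / 2) (by norm_num) using 4
  ring

lemma one_add_sq_pow (C : ℝ) (k : ℕ) : PolyGrowth fun x => C * (1 + x ^ 2) ^ k :=
  ⟨|C|, k, fun x => by
    rw [abs_mul, abs_of_nonneg (by positivity : (0 : ℝ) ≤ (1 + x ^ 2) ^ k)]⟩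

lemma exists_integrable_bound_mul_affine_gaussian (hf : PolyGrowth f) (A : ℝ) :
    ∃ bound : ℝ → ℝ, Integrable bound ∧ ∀ a σ a' σ' ξ, |a| ≤ A → |σ| ≤ A → |a'| ≤ A → |σ'| ≤ A →
      ‖f (a + σ * ξ) * (a' + σ' * ξ) * exp (-ξ ^ 2 / 2)‖ ≤ bound ξ := by
  obtain ⟨C, k, hC⟩ := hf.comp_affine_uniform A
  obtain ⟨D, l, hD⟩ := id.comp_affine_uniform A
  refine ⟨fun ξ => C * D * (1 + ξ ^ 2) ^ (k + l) * exp (-ξ ^ 2 / 2),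
    (one_add_sq_pow _ _).integrable_mul_gaussian (by fun_prop), fun a σ a' σ' ξ ha hσ ha' hσ' => ?_⟩
  rw [norm_mul, norm_mul, Real.norm_eq_abs, Real.norm_eq_abs, Real.norm_eq_abs, abs_exp]
  refine mul_le_mul_of_nonneg_right ?_ (exp_nonneg _)
  calc |f (a + σ * ξ)| * |a' + σ' * ξ| ≤ C * (1 + ξ ^ 2) ^ k * (D * (1 + ξ ^ 2) ^ l) :=
        mul_le_mul (hC _ _ _ ha hσ) (hD _ _ _ ha' hσ') (abs_nonneg _)
          ((abs_nonneg _).trans (hC _ _ _ ha hσ))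
    _ = C * D * (1 + ξ ^ 2) ^ (k + l) := by ring

end PolyGrowth

/-- A finite-order, one-variable analogue of `Function.HasTemperateGrowth`. -/
def HasTemperateGrowthUpTo : ℕ → (ℝ → ℝ) → Prop
  | 0, f => Continuous f ∧ PolyGrowth f
  | n + 1, f => Differentiable ℝ f ∧ PolyGrowth f ∧ HasTemperateGrowthUpTo n (deriv f)

namespace HasTemperateGrowthUpTo

variable {m n : ℕ} {f g : ℝ → ℝ}

lemma polyGrowth (hf : HasTemperateGrowthUpTo n f) : PolyGrowth f := by
  cases n with
  | zero => exact hf.2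
  | succ n => exact hf.2.1

lemma deriv (hf : HasTemperateGrowthUpTo (n + 1) f) :
    HasTemperateGrowthUpTo n (deriv f) :=
  hf.2.2

lemma differentiable (hf : HasTemperateGrowthUpTo (n + 1) f) :
    Differentiable ℝ f :=
  hf.1

lemma continuous (hf : HasTemperateGrowthUpTo n f) : Continuous f := by
  cases n with
  | zero => exact hf.1
  | succ n => exact hf.1.continuous

lemma of_succ (hf : HasTemperateGrowthUpTo (n + 1) f) :
    HasTemperateGrowthUpTo n f := by
  induction n generalizing f with
  | zero => exact ⟨hf.continuous, hf.polyGrowth⟩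
  | succ n ih => exact ⟨hf.differentiable, hf.polyGrowth, ih hf.deriv⟩

lemma mono (hf : HasTemperateGrowthUpTo n f) (h : m ≤ n) :
    HasTemperateGrowthUpTo m f := by
  induction h with
  | refl => exact hf
  | step _ ih => exact ih hf.of_succ

lemma add (hf : HasTemperateGrowthUpTo n f)
    (hg : HasTemperateGrowthUpTo n g) : HasTemperateGrowthUpTo n fun x => f x + g x := by
  induction n generalizing f g with
  | zero => exact ⟨hf.continuous.add hg.continuous, hf.polyGrowth.add hg.polyGrowth⟩
  | succ n ih =>
    refine ⟨hf.differentiable.add hg.differentiable, hf.polyGrowth.add hg.polyGrowth, ?_⟩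
    have : _root_.deriv (fun x => f x + g x) = fun x => _root_.deriv f x + _root_.deriv g x :=
      funext fun x => deriv_add (hf.differentiable x) (hg.differentiable x)
    exact this ▸ ih hf.deriv hg.deriv

lemma const_mul (hf : HasTemperateGrowthUpTo n f) (c : ℝ) :
    HasTemperateGrowthUpTo n fun x => c * f x := by
  induction n generalizing f with
  | zero => exact ⟨continuous_const.mul hf.continuous, hf.polyGrowth.const_mul c⟩
  | succ n ih =>
    refine ⟨hf.differentiable.const_mul c, hf.polyGrowth.const_mul c, ?_⟩
    have : _root_.deriv (fun x => c * f x) = fun x => c * _root_.deriv f x :=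
      funext fun x => deriv_const_mul c (hf.differentiable x)
    exact this ▸ ih hf.deriv

lemma sub (hf : HasTemperateGrowthUpTo n f)
    (hg : HasTemperateGrowthUpTo n g) : HasTemperateGrowthUpTo n fun x => f x - g x := by
  simpa [sub_eq_add_neg] using hf.add (hg.const_mul (-1))

lemma id_mul (hf : HasTemperateGrowthUpTo n f) :
    HasTemperateGrowthUpTo n fun x => x * f x := by
  induction n generalizing f with
  | zero => exact ⟨continuous_id.mul hf.continuous, PolyGrowth.id.mul hf.polyGrowth⟩
  | succ n ih =>
    refine ⟨differentiable_id.mul hf.differentiable, PolyGrowth.id.mul hf.polyGrowth, ?_⟩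
    have : _root_.deriv (fun x => x * f x) = fun x => f x + x * _root_.deriv f x := by
      funext x
      exact (((hasDerivAt_id' x).mul (hf.differentiable x).hasDerivAt).congr_deriv (by ring)).deriv
    exact this ▸ hf.of_succ.add (ih hf.deriv)

lemma comp_affine (hf : HasTemperateGrowthUpTo n f) (a σ : ℝ) :
    HasTemperateGrowthUpTo n fun ξ => f (a + σ * ξ) := by
  induction n generalizing f with
  | zero => exact ⟨hf.continuous.comp (by fun_prop), hf.polyGrowth.comp_affine a σ⟩
  | succ n ih =>
    have hd : ∀ ξ, HasDerivAt (fun ξ => f (a + σ * ξ)) (σ * _root_.deriv f (a + σ * ξ)) ξ :=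
      fun ξ => ((hf.differentiable _).hasDerivAt.comp ξ
        (((hasDerivAt_id' ξ).const_mul σ).const_add a)).congr_deriv (by ring)
    refine ⟨fun ξ => (hd ξ).differentiableAt, hf.polyGrowth.comp_affine a σ, ?_⟩
    rw [show _root_.deriv (fun ξ => f (a + σ * ξ)) = _ from funext fun ξ => (hd ξ).deriv]
    exact (ih hf.deriv).const_mul σ

lemma ouGen (hf : HasTemperateGrowthUpTo (n + 2) f) :
    HasTemperateGrowthUpTo n (OUgen f) := by
  have h := (hf.deriv.deriv.const_mul (1 / 4)).sub (hf.deriv.of_succ.id_mul.const_mul (1 / 2))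
  convert h using 2 with x
  simp only [OUgen]
  ring

end HasTemperateGrowthUpTo

lemma hasTemperateGrowthUpTo_of_contDiff {n : ℕ} {f : ℝ → ℝ} (hf : ContDiff ℝ n f)
    (hgrowth : ∀ j ≤ n, PolyGrowth (iteratedDeriv j f)) : HasTemperateGrowthUpTo n f := by
  induction n generalizing f with
  | zero => exact ⟨hf.continuous, by simpa using hgrowth 0 le_rfl⟩
  | succ n ih =>
    refine ⟨hf.differentiable (by simp), by simpa using hgrowth 0 (by omega), ih ?_ fun j hj => ?_⟩
    · exact (contDiff_succ_iff_deriv.mp (by exact_mod_cast hf)).2.2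
    · simpa [iteratedDeriv_succ'] using hgrowth (j + 1) (by omega)

noncomputable def gaussAvg (f : ℝ → ℝ) (a σ : ℝ) : ℝ :=
  ∫ ξ, f (a + σ * ξ) * exp (-ξ ^ 2 / 2)

noncomputable def ouScale (t : ℝ) : ℝ := √((1 - exp (-t)) / 2)

lemma mehler_eq_gaussAvg (t : ℝ) (f : ℝ → ℝ) (x : ℝ) :
    mehler t f x = (2 * π) ^ (-(1 : ℝ) / 2) * gaussAvg f (exp (-t / 2) * x) (ouScale t) :=
  rfl

section GaussAvg

variable {n : ℕ} {f g : ℝ → ℝ}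

lemma HasTemperateGrowthUpTo.integrable_mul_gaussian (hf : HasTemperateGrowthUpTo n f) :
    Integrable fun ξ => f ξ * exp (-ξ ^ 2 / 2) :=
  hf.polyGrowth.integrable_mul_gaussian hf.continuous.aestronglyMeasurable

lemma HasTemperateGrowthUpTo.integrable_gaussAvg (hf : HasTemperateGrowthUpTo n f) (a σ : ℝ) :
    Integrable fun ξ => f (a + σ * ξ) * exp (-ξ ^ 2 / 2) :=
  (hf.comp_affine a σ).integrable_mul_gaussian

lemma gaussAvg_add {m : ℕ} (hf : HasTemperateGrowthUpTo n f) (hg : HasTemperateGrowthUpTo m g)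
    (a σ : ℝ) : gaussAvg (fun y => f y + g y) a σ = gaussAvg f a σ + gaussAvg g a σ := by
  simp only [gaussAvg, add_mul]
  exact integral_add (hf.integrable_gaussAvg a σ) (hg.integrable_gaussAvg a σ)

lemma gaussAvg_sub {m : ℕ} (hf : HasTemperateGrowthUpTo n f) (hg : HasTemperateGrowthUpTo m g)
    (a σ : ℝ) : gaussAvg (fun y => f y - g y) a σ = gaussAvg f a σ - gaussAvg g a σ := by
  simp only [gaussAvg, sub_mul]
  exact integral_sub (hf.integrable_gaussAvg a σ) (hg.integrable_gaussAvg a σ)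

lemma gaussAvg_const_mul (c : ℝ) (f : ℝ → ℝ) (a σ : ℝ) :
    gaussAvg (fun y => c * f y) a σ = c * gaussAvg f a σ := by
  simp only [gaussAvg, mul_assoc, integral_const_mul]

lemma gaussAvg_mono {m : ℕ} (hf : HasTemperateGrowthUpTo n f) (hg : HasTemperateGrowthUpTo m g)
    (h : ∀ y, f y ≤ g y) (a σ : ℝ) : gaussAvg f a σ ≤ gaussAvg g a σ :=
  integral_mono (hf.integrable_gaussAvg a σ) (hg.integrable_gaussAvg a σ) fun _ =>
    mul_le_mul_of_nonneg_right (h _) (exp_nonneg _)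

lemma gaussAvg_zero_right (f : ℝ → ℝ) (a : ℝ) : gaussAvg f a 0 = √(2 * π) * f a := by
  have h := integral_gaussian (1 / 2)
  simp only [gaussAvg, zero_mul, add_zero, integral_const_mul]
  rw [show π / (1 / 2) = 2 * π by ring] at h
  rw [mul_comm, ← h]
  congr 2 with _
  ring_nf

lemma HasTemperateGrowthUpTo.continuous_gaussAvg (hf : HasTemperateGrowthUpTo n f) :
    Continuous fun p : ℝ × ℝ => gaussAvg f p.1 p.2 := by
  refine continuous_iff_continuousAt.2 fun p₀ => ?_
  set A := |p₀.1| + |p₀.2| + 1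
  obtain ⟨C, k, hC⟩ := hf.polyGrowth.comp_affine_uniform A
  have hnear : ∀ᶠ p : ℝ × ℝ in 𝓝 p₀, |p.1| < A ∧ |p.2| < A :=
    (continuous_fst.abs.continuousAt.eventually_lt continuousAt_const
        (by simp only [A]; linarith [abs_nonneg p₀.2])).and
      (continuous_snd.abs.continuousAt.eventually_lt continuousAt_const
        (by simp only [A]; linarith [abs_nonneg p₀.1]))
  refine continuousAt_of_dominated (bound := fun ξ => C * (1 + ξ ^ 2) ^ k * exp (-ξ ^ 2 / 2))
    (Eventually.of_forall fun p => (hf.integrable_gaussAvg p.1 p.2).aestronglyMeasurable) ?_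
    ((PolyGrowth.one_add_sq_pow C k).integrable_mul_gaussian (by fun_prop))
    (Eventually.of_forall fun ξ => ?_)
  · filter_upwards [hnear] with p hp
    refine Eventually.of_forall fun ξ => ?_
    rw [norm_mul, Real.norm_eq_abs, Real.norm_eq_abs, abs_exp]
    exact mul_le_mul_of_nonneg_right (hC _ _ _ hp.1.le hp.2.le) (exp_nonneg _)
  · exact ((hf.continuous.comp (by fun_prop)).mul continuous_const).continuousAt

lemma integral_id_mul_gaussian (hg : HasTemperateGrowthUpTo 1 g) :
    ∫ ξ, ξ * g ξ * exp (-ξ ^ 2 / 2) = ∫ ξ, deriv g ξ * exp (-ξ ^ 2 / 2) := by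
  have hφ : ∀ ξ : ℝ, HasDerivAt (fun ξ => exp (-ξ ^ 2 / 2)) (-ξ * exp (-ξ ^ 2 / 2)) ξ := by
    intro ξ
    have h : HasDerivAt (fun ξ : ℝ => -ξ ^ 2 / 2) (-ξ) ξ := by
      convert (hasDerivAt_pow 2 ξ).const_mul (-1 / 2 : ℝ) using 1 <;> first | (ext; ring) | ring
    convert h.exp using 1
    ring
  have h := integral_mul_deriv_eq_deriv_mul_of_integrable (u := g) (v := fun ξ => exp (-ξ ^ 2 / 2))
    (fun ξ _ => (hg.differentiable ξ).hasDerivAt) (fun ξ _ => hφ ξ)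
    (by simpa [Pi.mul_def, mul_assoc, mul_left_comm] using
      (hg.of_succ.id_mul.const_mul (-1)).integrable_mul_gaussian)
    hg.deriv.integrable_mul_gaussian hg.of_succ.integrable_mul_gaussian
  simp only [mul_neg, neg_mul, integral_neg, neg_inj] at h
  simpa [mul_assoc, mul_left_comm] using h

lemma integral_id_mul_gaussAvg (hg : HasTemperateGrowthUpTo 1 g)
    (a σ : ℝ) :
    ∫ ξ, ξ * g (a + σ * ξ) * exp (-ξ ^ 2 / 2) = σ * gaussAvg (deriv g) a σ := by
  have hd : deriv (fun ξ => g (a + σ * ξ)) = fun ξ => σ * deriv g (a + σ * ξ) :=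
    funext fun ξ => (((hg.differentiable _).hasDerivAt.comp ξ
      (((hasDerivAt_id' ξ).const_mul σ).const_add a)).congr_deriv (by ring)).deriv
  rw [integral_id_mul_gaussian (hg.comp_affine a σ), hd]
  simp only [gaussAvg, mul_assoc, integral_const_mul]

end GaussAvg

lemma hasDerivAt_gaussAvg {f : ℝ → ℝ} (hf : HasTemperateGrowthUpTo 1 f)
    {a σ a' σ' : ℝ → ℝ} {s₀ : ℝ}
    (ha : ∀ᶠ s in 𝓝 s₀, HasDerivAt a (a' s) s) (hσ : ∀ᶠ s in 𝓝 s₀, HasDerivAt σ (σ' s) s)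
    (ha' : ContinuousAt a' s₀) (hσ' : ContinuousAt σ' s₀) :
    HasDerivAt (fun s => gaussAvg f (a s) (σ s))
      (a' s₀ * gaussAvg (deriv f) (a s₀) (σ s₀) +
        σ' s₀ * ∫ ξ, ξ * deriv f (a s₀ + σ s₀ * ξ) * exp (-ξ ^ 2 / 2)) s₀ := by
  have hf' := hf.deriv
  set A := |a s₀| + |σ s₀| + |a' s₀| + |σ' s₀| + 1
  have hnear : ∀ {h : ℝ → ℝ}, ContinuousAt h s₀ → |h s₀| < A → ∀ᶠ s in 𝓝 s₀, |h s| ≤ A :=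
    fun hh hlt => (hh.abs.eventually_lt continuousAt_const hlt).mono fun _ => le_of_lt
  have hbdd : ∀ᶠ s in 𝓝 s₀, |a s| ≤ A ∧ |σ s| ≤ A ∧ |a' s| ≤ A ∧ |σ' s| ≤ A := by
    have := abs_nonneg (a s₀); have := abs_nonneg (σ s₀)
    have := abs_nonneg (a' s₀); have := abs_nonneg (σ' s₀)
    exact (hnear ha.self_of_nhds.continuousAt (by linarith)).and
      ((hnear hσ.self_of_nhds.continuousAt (by linarith)).and
        ((hnear ha' (by linarith)).and (hnear hσ' (by linarith))))
  obtain ⟨ε, hε, hball⟩ := Metric.eventually_nhds_iff_ball.1 (ha.and (hσ.and hbdd))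
  obtain ⟨bound, hbound, hdom⟩ := hf'.polyGrowth.exists_integrable_bound_mul_affine_gaussian A
  have hderiv : ∀ ξ, ∀ s ∈ Metric.ball s₀ ε,
      HasDerivAt (fun s => f (a s + σ s * ξ) * exp (-ξ ^ 2 / 2))
        (deriv f (a s + σ s * ξ) * (a' s + σ' s * ξ) * exp (-ξ ^ 2 / 2)) s := fun ξ s hs =>
    ((hf.differentiable _).hasDerivAt.comp s
      ((hball s hs).1.add ((hball s hs).2.1.mul_const ξ))).mul_const _
  have key := hasDerivAt_integral_of_dominated_loc_of_deriv_le (Metric.ball_mem_nhds s₀ hε)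
    (Eventually.of_forall fun s => (hf.integrable_gaussAvg (a s) (σ s)).aestronglyMeasurable)
    (hf.integrable_gaussAvg (a s₀) (σ s₀))
    (((hf'.continuous.comp (by fun_prop)).mul (by fun_prop)).mul (by fun_prop)).aestronglyMeasurable
    (Eventually.of_forall fun ξ s hs => by
      obtain ⟨-, -, ha, hσ, ha', hσ'⟩ := hball s hs
      exact hdom _ _ _ _ ξ ha hσ ha' hσ')
    hbound (Eventually.of_forall hderiv)
  refine key.2.congr_deriv ?_
  have h₁ := (hf'.integrable_gaussAvg (a s₀) (σ s₀)).const_mul (a' s₀)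
  have h₂ : Integrable fun ξ => σ' s₀ * (ξ * deriv f (a s₀ + σ s₀ * ξ) * exp (-ξ ^ 2 / 2)) := by
    simpa [mul_assoc] using
      (hf'.comp_affine (a s₀) (σ s₀)).id_mul.integrable_mul_gaussian.const_mul (σ' s₀)
  rw [gaussAvg, ← integral_const_mul, ← integral_const_mul, ← integral_add h₁ h₂]
  congr 1 with ξ
  ring

lemma gaussAvg_ouGen {f : ℝ → ℝ} (hf : HasTemperateGrowthUpTo 2 f) (a σ : ℝ) :
    gaussAvg (OUgen f) a σ =
      (1 / 4 - σ ^ 2 / 2) * gaussAvg (deriv (deriv f)) a σ - a / 2 * gaussAvg (deriv f) a σ := by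
  have hf' := hf.deriv
  have h₂ := hf'.deriv.integrable_gaussAvg a σ
  have h₁ := hf'.integrable_gaussAvg a σ
  have hJ : Integrable fun ξ => ξ * deriv f (a + σ * ξ) * exp (-ξ ^ 2 / 2) := by
    simpa [mul_assoc] using (hf'.comp_affine a σ).id_mul.integrable_mul_gaussian
  calc gaussAvg (OUgen f) a σ
      = ∫ ξ, (1 / 4 * (deriv (deriv f) (a + σ * ξ) * exp (-ξ ^ 2 / 2)) -
          a / 2 * (deriv f (a + σ * ξ) * exp (-ξ ^ 2 / 2))) -
          σ / 2 * (ξ * deriv f (a + σ * ξ) * exp (-ξ ^ 2 / 2)) := by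
        unfold gaussAvg OUgen
        congr 1 with ξ
        ring
    _ = 1 / 4 * gaussAvg (deriv (deriv f)) a σ - a / 2 * gaussAvg (deriv f) a σ -
          σ / 2 * ∫ ξ, ξ * deriv f (a + σ * ξ) * exp (-ξ ^ 2 / 2) := by
        have h₃ : Integrable fun ξ => 1 / 4 * (deriv (deriv f) (a + σ * ξ) * exp (-ξ ^ 2 / 2)) -
            a / 2 * (deriv f (a + σ * ξ) * exp (-ξ ^ 2 / 2)) :=
          (h₂.const_mul _).sub (h₁.const_mul _)
        rw [integral_sub h₃ (hJ.const_mul _), integral_sub (h₂.const_mul _) (h₁.const_mul _)]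
        simp only [integral_const_mul, gaussAvg]
    _ = _ := by
        rw [integral_id_mul_gaussAvg hf' a σ]
        ring

lemma ouScale_sq {t : ℝ} (ht : 0 ≤ t) : ouScale t ^ 2 = (1 - exp (-t)) / 2 :=
  sq_sqrt (by linarith [exp_le_one_iff.2 (neg_nonpos.2 ht)])

lemma ouScale_pos {t : ℝ} (ht : 0 < t) : 0 < ouScale t :=
  sqrt_pos.2 (by linarith [exp_lt_one_iff.2 (neg_neg_iff_pos.2 ht)])

@[fun_prop]
lemma continuous_ouScale : Continuous ouScale := by
  unfold ouScale; fun_prop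

lemma hasDerivAt_ouScale {t : ℝ} (ht : 0 < t) :
    HasDerivAt ouScale (exp (-t) / (4 * ouScale t)) t := by
  have h : HasDerivAt (fun t => (1 - exp (-t)) / 2) (exp (-t) / 2) t := by
    have := ((hasDerivAt_neg t).exp.const_sub 1).div_const 2
    simp only [mul_neg, mul_one, neg_neg] at this
    exact this
  have hX : (1 - exp (-t)) / 2 ≠ 0 := by
    have := ouScale_pos ht
    unfold ouScale at this
    exact (sqrt_pos.1 this).ne'
  refine (h.sqrt hX).congr_deriv ?_
  rw [div_div, ouScale]
  ring

section Mehler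

variable {m n : ℕ} {f g : ℝ → ℝ}

lemma mehler_zero (f : ℝ → ℝ) (x : ℝ) : mehler 0 f x = f x := by
  rw [mehler_eq_gaussAvg, show ouScale 0 = 0 by simp [ouScale], gaussAvg_zero_right, ← mul_assoc,
    sqrt_eq_rpow, ← rpow_add (by positivity)]
  norm_num

lemma HasTemperateGrowthUpTo.continuous_mehler (hf : HasTemperateGrowthUpTo n f) (x : ℝ) :
    Continuous fun t => mehler t f x :=
  continuous_const.mul (hf.continuous_gaussAvg.comp (by fun_prop : Continuous fun t =>
    (exp (-t / 2) * x, ouScale t)))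

lemma mehler_add (hf : HasTemperateGrowthUpTo n f) (hg : HasTemperateGrowthUpTo m g) (t x : ℝ) :
    mehler t (fun y => f y + g y) x = mehler t f x + mehler t g x := by
  simp only [mehler_eq_gaussAvg, gaussAvg_add hf hg, mul_add]

lemma mehler_sub (hf : HasTemperateGrowthUpTo n f) (hg : HasTemperateGrowthUpTo m g) (t x : ℝ) :
    mehler t (fun y => f y - g y) x = mehler t f x - mehler t g x := by
  simp only [mehler_eq_gaussAvg, gaussAvg_sub hf hg, mul_sub]

lemma mehler_const_mul (c : ℝ) (f : ℝ → ℝ) (t x : ℝ) :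
    mehler t (fun y => c * f y) x = c * mehler t f x := by
  simp only [mehler_eq_gaussAvg, gaussAvg_const_mul]
  ring

lemma mehler_mono (hf : HasTemperateGrowthUpTo n f) (hg : HasTemperateGrowthUpTo m g)
    (h : ∀ y, f y ≤ g y) (t x : ℝ) : mehler t f x ≤ mehler t g x :=
  mul_le_mul_of_nonneg_left (gaussAvg_mono hf hg h _ _) (by positivity)

/-- After differentiating under the integral, the `σ'`-term becomes `σσ' · P_t f''` by Gaussian
integration by parts, and `σσ' = e^{-t}/4 = 1/4 - σ²/2` matches `gaussAvg_ouGen`. -/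
lemma hasDerivAt_mehler (hf : HasTemperateGrowthUpTo 2 f) (x : ℝ) {t : ℝ} (ht : 0 < t) :
    HasDerivAt (fun t => mehler t f x) (mehler t (OUgen f) x) t := by
  have ha : ∀ s, HasDerivAt (fun s => exp (-s / 2) * x) (-(exp (-s / 2) * x) / 2) s := fun s =>
    (((hasDerivAt_neg s).div_const 2).exp.mul_const x).congr_deriv (by ring)
  have hσ : ∀ᶠ s in 𝓝 t, HasDerivAt ouScale (exp (-s) / (4 * ouScale s)) s :=
    (lt_mem_nhds ht).mono fun _ => hasDerivAt_ouScale
  have hσ' : ContinuousAt (fun s => exp (-s) / (4 * ouScale s)) t :=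
    ((continuous_exp.comp continuous_neg).continuousAt).div
      (continuous_ouScale.continuousAt.const_mul 4) (by positivity [ouScale_pos ht])
  have hD := hasDerivAt_gaussAvg hf.of_succ (Eventually.of_forall ha) hσ (by fun_prop) hσ'
  rw [integral_id_mul_gaussAvg hf.deriv] at hD
  refine (hD.const_mul _).congr_deriv ?_
  have hσt : ouScale t ≠ 0 := (ouScale_pos ht).ne'
  rw [mehler_eq_gaussAvg, gaussAvg_ouGen hf, ouScale_sq ht.le]
  field_simp
  ring

end Mehler

/-- Grönwall: `t ↦ e^{-tA} e^{tL} f` is nonincreasing. -/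
lemma mehler_le_exp_mul {f : ℝ → ℝ} (hf : HasTemperateGrowthUpTo 2 f) {A : ℝ}
    (hL : ∀ y, OUgen f y ≤ A * f y) {t : ℝ} (ht : 0 ≤ t) (x : ℝ) :
    mehler t f x ≤ exp (t * A) * f x := by
  have hΨ : ∀ s ∈ interior (Set.Icc 0 t), HasDerivAt (fun s => exp (-(s * A)) * mehler s f x)
      (exp (-(s * A)) * (mehler s (OUgen f) x - A * mehler s f x)) s := fun s hs => by
    rw [interior_Icc] at hs
    exact ((((hasDerivAt_mul_const A).neg).exp).mul (hasDerivAt_mehler hf x hs.1)).congr_deriv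
      (by simp only [Pi.neg_apply]; ring)
  have hanti := antitoneOn_of_hasDerivWithinAt_nonpos (convex_Icc 0 t)
    (f := fun s => exp (-(s * A)) * mehler s f x)
    ((continuous_exp.comp (continuous_mul_const A).neg).mul (hf.continuous_mehler x)).continuousOn
    (fun s hs => (hΨ s hs).hasDerivWithinAt) fun s hs => by
      have hle := mehler_mono hf.ouGen (hf.const_mul A) hL s x
      rw [mehler_const_mul] at hle
      exact mul_nonpos_of_nonneg_of_nonpos (exp_nonneg _) (by linarith)
  have h := hanti (Set.left_mem_Icc.2 ht) (Set.right_mem_Icc.2 ht) ht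
  simp only [zero_mul, neg_zero, exp_zero, one_mul, mehler_zero] at h
  calc mehler t f x = exp (t * A) * (exp (-(t * A)) * mehler t f x) := by
        rw [← mul_assoc, ← exp_add, add_neg_cancel, exp_zero, one_mul]
    _ ≤ exp (t * A) * f x := mul_le_mul_of_nonneg_left h (exp_nonneg _)

lemma neg_mul_exp_le_mehler {f g : ℝ → ℝ} (hf : HasTemperateGrowthUpTo 2 f) (hf0 : ∀ y, 0 ≤ f y)
    {n : ℕ} (hg : HasTemperateGrowthUpTo n g) {A₁ A₃ : ℝ} (hA₁ : 0 ≤ A₁) (hA₃ : 0 ≤ A₃)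
    (hL : ∀ y, OUgen f y ≤ A₁ * f y) (hgf : ∀ y, -A₃ * f y ≤ g y) {s t : ℝ} (hs : 0 ≤ s)
    (hst : s ≤ t) (x : ℝ) : -(A₃ * exp (t * A₁) * f x) ≤ mehler s g x := by
  have hlow := mehler_mono (hf.const_mul (-A₃)) hg hgf s x
  rw [mehler_const_mul] at hlow
  have hexp : exp (s * A₁) ≤ exp (t * A₁) := exp_le_exp.2 (mul_le_mul_of_nonneg_right hst hA₁)
  have hup : A₃ * mehler s f x ≤ A₃ * exp (t * A₁) * f x := by
    rw [mul_assoc]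
    exact mul_le_mul_of_nonneg_left ((mehler_le_exp_mul hf hL hs x).trans
      (mul_le_mul_of_nonneg_right hexp (hf0 x))) hA₃
  linarith

lemma mehler_taylor_lower_bound {v : ℝ → ℝ} (hv : HasTemperateGrowthUpTo 6 v) (hv0 : ∀ y, 0 ≤ v y)
    {A₁ A₃ : ℝ} (hA₁ : 0 ≤ A₁) (hA₃ : 0 ≤ A₃) (hL1 : ∀ y, OUgen v y ≤ A₁ * v y)
    (hL3 : ∀ y, -A₃ * v y ≤ OUgen (OUgen (OUgen v)) y) {t : ℝ} (ht : 0 ≤ t) (x : ℝ) :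
    v x - t ^ 3 / 6 * (A₃ * exp (t * A₁) * v x) ≤
      mehler t v x - t * mehler t (OUgen v) x + t ^ 2 / 2 * mehler t (OUgen (OUgen v)) x := by
  have hv₄ := hv.ouGen
  have hv₂ := hv₄.ouGen
  set K := A₃ * exp (t * A₁) * v x
  set Φ := fun s => mehler s v x - s * mehler s (OUgen v) x +
    s ^ 2 / 2 * mehler s (OUgen (OUgen v)) x + s ^ 3 / 6 * K
  have hΦ : ∀ s ∈ interior (Set.Icc 0 t),
      HasDerivAt Φ (s ^ 2 / 2 * (mehler s (OUgen (OUgen (OUgen v))) x + K)) s := fun s hs => by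
    rw [interior_Icc] at hs
    have h₀ := hasDerivAt_mehler (hv.mono (by norm_num)) x hs.1
    have h₁ := hasDerivAt_mehler (hv₄.mono (by norm_num)) x hs.1
    have h₂ := hasDerivAt_mehler hv₂ x hs.1
    have hp : ∀ k : ℕ, HasDerivAt (fun s : ℝ => s ^ (k + 1)) ((k + 1 : ℕ) * s ^ k) s := fun k =>
      hasDerivAt_pow (k + 1) s
    refine (((h₀.sub ((hasDerivAt_id' s).mul h₁)).add (((hp 1).div_const 2).mul h₂)).add
      (((hp 2).div_const 6).mul_const K)).congr_deriv ?_
    push_cast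
    ring
  have hΦc : Continuous Φ := by
    have := hv.continuous_mehler x; have := hv₄.continuous_mehler x
    have := hv₂.continuous_mehler x
    fun_prop
  have hmono := monotoneOn_of_hasDerivWithinAt_nonneg (convex_Icc 0 t) hΦc.continuousOn
    (fun s hs => (hΦ s hs).hasDerivWithinAt) fun s hs => by
      rw [interior_Icc] at hs
      have := neg_mul_exp_le_mehler (hv.mono (by norm_num)) hv0 hv₂.ouGen hA₁ hA₃ hL1 hL3
        hs.1.le hs.2.le x
      exact mul_nonneg (by positivity) (by linarith)
  have h := hmono (Set.left_mem_Icc.2 ht) (Set.right_mem_Icc.2 ht) ht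
  simp only [Φ, mehler_zero] at h
  linarith

lemma HasTemperateGrowthUpTo.integrable_exp_neg_sq_mul {n : ℕ} {f : ℝ → ℝ}
    (hf : HasTemperateGrowthUpTo n f) : Integrable fun x => exp (-x ^ 2) * f x := by
  simpa [mul_comm] using
    hf.polyGrowth.integrable_mul_exp_neg_mul_sq hf.continuous.aestronglyMeasurable one_pos

lemma integral_gaussMeasure (g : ℝ → ℝ) :
    ∫ x, g x ∂gaussMeasure = ∫ x, exp (-x ^ 2) * g x := by
  rw [gaussMeasure, integral_withDensity_eq_integral_toReal_smul (by fun_prop)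
    (Eventually.of_forall fun _ => ENNReal.ofReal_lt_top)]
  simp only [ENNReal.toReal_ofReal (exp_nonneg _), smul_eq_mul]

lemma HasTemperateGrowthUpTo.integrable_gaussMeasure {n : ℕ} {f : ℝ → ℝ}
    (hf : HasTemperateGrowthUpTo n f) : Integrable f gaussMeasure := by
  rw [gaussMeasure, integrable_withDensity_iff_integrable_smul' (by fun_prop)
    (Eventually.of_forall fun _ => ENNReal.ofReal_lt_top)]
  simpa [ENNReal.toReal_ofReal (exp_nonneg _)] using hf.integrable_exp_neg_sq_mul

/-- `Lf · e^{-x²} = (f' e^{-x²})' / 4`. -/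
lemma integral_ouGen_gaussMeasure {f : ℝ → ℝ} (hf : HasTemperateGrowthUpTo 2 f) :
    ∫ x, OUgen f x ∂gaussMeasure = 0 := by
  rw [integral_gaussMeasure]
  have hd : ∀ x, HasDerivAt (fun x => exp (-x ^ 2) * (1 / 4 * deriv f x))
      (exp (-x ^ 2) * OUgen f x) x := fun x => by
    refine ((hasDerivAt_pow 2 x).neg.exp.mul
      ((hf.deriv.differentiable x).hasDerivAt.const_mul (1 / 4))).congr_deriv ?_
    simp only [OUgen, Pi.neg_apply]
    push_cast
    ring
  exact integral_eq_zero_of_hasDerivAt_of_integrable hd hf.ouGen.integrable_exp_neg_sq_mul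
    (hf.deriv.const_mul (1 / 4)).integrable_exp_neg_sq_mul

/-- Approximate time reversal, lower bound: under `Lv ≤ A₁v`, `L²v ≥ −A₂v`,
`|L³v| ≤ A₃v` and the smallness conditions `tA₁ + t²A₂/2 ≤ 1`, `t³A₃ ≤ 1`,
the function `g_t = (1 − tL + t²L²/2)v` is a probability density w.r.t. `μ`, and
`v_t = e^{tL}g_t` satisfies `v_t ≥ (1 − t³A₃e^{tA₁}/6)v ≥ v/2` pointwise. -/
theorem approximate_time_reversal_lower_bound
    (v : ℝ → ℝ) (hv : ContDiff ℝ 6 v) (hpos : ∀ x, 0 < v x)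
    (hgrowth : ∃ (C : ℝ) (k : ℕ), ∀ x : ℝ,
      ∑ j ∈ Finset.range 7, |iteratedDeriv j v x| ≤ C * (1 + x ^ 2) ^ k)
    (hprob : ∫ x, v x ∂gaussMeasure = 1)
    (A₁ A₂ A₃ : ℝ) (hA₁ : 0 ≤ A₁) (hA₂ : 0 ≤ A₂) (hA₃ : 0 ≤ A₃)
    (hL1 : ∀ x, OUgen v x ≤ A₁ * v x)
    (hL2 : ∀ x, -A₂ * v x ≤ OUgen (OUgen v) x)
    (hL3 : ∀ x, |OUgen (OUgen (OUgen v)) x| ≤ A₃ * v x)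
    (t : ℝ) (ht : 0 < t) (htA : t * A₁ + t ^ 2 / 2 * A₂ ≤ 1) (htA3 : t ^ 3 * A₃ ≤ 1) :
    (∀ x, 0 ≤ v x - t * OUgen v x + t ^ 2 / 2 * OUgen (OUgen v) x) ∧
      (∫ x, (v x - t * OUgen v x + t ^ 2 / 2 * OUgen (OUgen v) x) ∂gaussMeasure = 1) ∧
      (∀ x, (1 - (1 / 6) * t ^ 3 * A₃ * Real.exp (t * A₁)) * v x ≤
          mehler t (fun z => v z - t * OUgen v z + t ^ 2 / 2 * OUgen (OUgen v) z) x) ∧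
      (∀ x, (1 / 2) * v x ≤ (1 - (1 / 6) * t ^ 3 * A₃ * Real.exp (t * A₁)) * v x) := by
  obtain ⟨C, k, hC⟩ := hgrowth
  have hv₆ : HasTemperateGrowthUpTo 6 v := hasTemperateGrowthUpTo_of_contDiff hv fun j hj =>
    ⟨C, k, fun x => (Finset.single_le_sum (fun i _ => abs_nonneg (iteratedDeriv i v x))
      (Finset.mem_range.2 (Nat.lt_succ_of_le hj))).trans (hC x)⟩
  have hv₄ := hv₆.ouGen
  have hv₂ := hv₄.ouGen
  have hv0 : ∀ x, 0 ≤ v x := fun x => (hpos x).le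
  refine ⟨fun x => ?_, ?_, fun x => ?_, fun x => ?_⟩
  · nlinarith [mul_le_mul_of_nonneg_left (hL1 x) ht.le, hv0 x,
      mul_le_mul_of_nonneg_left (hL2 x) (by positivity : (0 : ℝ) ≤ t ^ 2 / 2)]
  · have h₁ : Integrable (fun x => v x - t * OUgen v x) gaussMeasure :=
      ((hv₆.mono (by norm_num)).sub (hv₄.const_mul t)).integrable_gaussMeasure
    rw [integral_add h₁ (hv₂.integrable_gaussMeasure.const_mul _),
      integral_sub hv₆.integrable_gaussMeasure (hv₄.integrable_gaussMeasure.const_mul t),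
      integral_const_mul, integral_const_mul, integral_ouGen_gaussMeasure (hv₆.mono (by norm_num)),
      integral_ouGen_gaussMeasure (hv₄.mono (by norm_num)), hprob]
    ring
  · rw [mehler_add ((hv₆.mono (by norm_num)).sub (hv₄.const_mul t)) (hv₂.const_mul _),
      mehler_sub hv₆ (hv₄.const_mul t), mehler_const_mul, mehler_const_mul]
    have := mehler_taylor_lower_bound hv₆ hv0 hA₁ hA₃ hL1
      (fun y => by linarith [(abs_le.1 (hL3 y)).1]) ht.le x
    linarith
  · have hexp : exp (t * A₁) ≤ 3 := (exp_le_exp.2 (by nlinarith : t * A₁ ≤ 1)).trans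
      (exp_one_lt_d9.le.trans (by norm_num))
    nlinarith [mul_le_mul htA3 hexp (exp_nonneg _) zero_le_one, hv0 x]
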